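/- arXiv:1005.2806 — 2 statements merged into one kernel-verified Lean document; each statement's English description precedes it below -/
import Mathlib

section
/- For a vocabulary τ with |τ| ≤ θ and an ordinal α, the transitive closure E¹_{θ,α} of the relation E⁰_{θ,α} (ISO wins the game Γ_{θ,α}) is an equivalence relation on the class of τ-structures with at most ℶ_{α+1}(θ) equivalence classes. -/
/-!
Let `BackForth β` be Karp's back-and-forth relation of depth `β` between structures carrying
injective partial assignments of a fixed index set of size `θ`: the atomic diagrams of the
assignments agree, and for each `β' < β` every extension of either assignment is matched, at depth
`β'`, by an extension of the other. By induction on `β` it has at most `ℶ_{β+1}(θ)` classes, since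
a class is determined by an atomic diagram (one of `2^θ` sets of indexed atomic formulas) together
with, for each `β' < β`, the set of depth-`β'` classes of its extensions; the product
`∏_{β'<β} 2^{ℶ_{β'+1}(θ)}` stays below `ℶ_{β+1}(θ)` because `|β| ≤ ℶ_β(θ)`.

Structures that are `BackForth α`-related from the empty assignment are `E⁰_{θ,α}`-related: ISO
maintains two such related assignments, indexed by `θ × ℕ`, whose composite is the current partial
isomorphism. When AIS enlarges the left board in round `n`, every element of the previous left
board that has no index yet gets a fresh index of level `n`, and the forth property at the new
ordinal provides the matching right assignment; right moves are left moves with the structures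
exchanged. So `E¹_{θ,α}`-classes inject into `BackForth α`-classes.
-/

universe u

open FirstOrder Cardinal

namespace ShelahGame

variable (L : FirstOrder.Language.{u, u}) (M N : Type u) [L.Structure M] [L.Structure N]

/-- `g` preserves satisfaction of atomic formulas (hence also of their negations). -/
def PreservesAtomic (g : M ≃. N) : Prop :=
  ∀ (k : ℕ) (φ : L.BoundedFormula (Fin k) 0), φ.IsAtomic →
    ∀ (v : Fin k → M) (w : Fin k → N), (∀ i, w i ∈ g (v i)) →
      (φ.Realize v (fun i => i.elim0) ↔ φ.Realize w (fun i => i.elim0))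

/-- A state of the game `Γ_{θ,α}[M,N]`. -/
structure GState (θ : Cardinal.{u}) (α : Ordinal.{u}) : Type (u + 1) where
  A1 : Set M
  A2 : Set N
  card1 : #A1 ≤ θ
  card2 : #A2 ≤ θ
  h1 : M → ℕ
  h2 : N → ℕ
  g : M ≃. N
  dom_sub : ∀ a : M, (g a).isSome → a ∈ A1
  ran_sub : ∀ b : N, (g.symm b).isSome → b ∈ A2
  pres : PreservesAtomic L M N g
  β : Ordinal.{u}
  β_le : β ≤ α
  n : ℕ
  debt1 : ∀ a : M, (g a).isSome → h1 a < n
  debt2 : ∀ b : N, (g.symm b).isSome → h2 b < n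

/-- A (legal) move of the anti-isomorphism player at state `s`. -/
inductive AISMove {θ : Cardinal.{u}} {α : Ordinal.{u}} (s : GState L M N θ α) : Type (u + 1)
  | left (β' : Ordinal.{u}) (hβ : β' < s.β) (A' : Set M) (hsub : s.A1 ⊆ A') (hcard : #A' ≤ θ) :
      AISMove s
  | right (β' : Ordinal.{u}) (hβ : β' < s.β) (A' : Set N) (hsub : s.A2 ⊆ A') (hcard : #A' ≤ θ) :
      AISMove s

/-- Legality of a response `t` of the isomorphism player to the move `m` at state `s`. -/
def Resp {θ : Cardinal.{u}} {α : Ordinal.{u}} (s : GState L M N θ α)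
    (m : AISMove L M N s) (t : GState L M N θ α) : Prop :=
  t.n = s.n + 1 ∧
  (∀ a : M, (s.g a).isSome → t.g a = s.g a) ∧
  (∀ a ∈ s.A1, t.h1 a = s.h1 a) ∧
  (∀ b ∈ s.A2, t.h2 b = s.h2 b) ∧
  match m with
  | .left β' _ A' _ _ =>
      t.β = β' ∧ t.A1 = A' ∧
      t.A2 = s.A2 ∪ {b : N | (t.g.symm b).isSome} ∧
      (∀ a ∈ A', a ∉ s.A1 → s.n + 1 ≤ t.h1 a) ∧
      (∀ a : M, (t.g a).isSome ↔ a ∈ s.A1 ∧ s.h1 a < s.n + 1)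
  | .right β' _ A' _ _ =>
      t.β = β' ∧ t.A2 = A' ∧
      t.A1 = s.A1 ∪ {a : M | (t.g a).isSome} ∧
      (∀ b ∈ A', b ∉ s.A2 → s.n + 1 ≤ t.h2 b) ∧
      (∀ b : N, (t.g.symm b).isSome ↔ b ∈ s.A2 ∧ s.h2 b < s.n + 1)

/-- The isomorphism player has a winning strategy from state `s`
(every play of the game is finite, so this inductive definition is equivalent
to the existence of a winning strategy). -/
inductive ISOWins : {θ : Cardinal.{u}} → {α : Ordinal.{u}} → GState L M N θ α → Prop
  | intro {θ : Cardinal.{u}} {α : Ordinal.{u}} (s : GState L M N θ α)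
      (resp : AISMove L M N s → GState L M N θ α)
      (hresp : ∀ m, Resp L M N s m (resp m))
      (hwin : ∀ m, ISOWins (resp m)) : ISOWins s

/-- The anti-isomorphism player has a winning strategy from state `s`. -/
inductive AISWins : {θ : Cardinal.{u}} → {α : Ordinal.{u}} → GState L M N θ α → Prop
  | intro {θ : Cardinal.{u}} {α : Ordinal.{u}} (s : GState L M N θ α) (m : AISMove L M N s)
      (h : ∀ t, Resp L M N s m t → AISWins t) : AISWins s

/-- The isomorphism player wins the game `Γ_{θ,α}[M,N]`: the initial configuration
(empty sets, empty partial injection, ordinal `α`, move number `0`) is a legal state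
and ISO has a winning strategy from it. -/
def ISOWinsGame (θ : Cardinal.{u}) (α : Ordinal.{u}) : Prop :=
  ∃ s : GState L M N θ α,
    s.A1 = ∅ ∧ s.A2 = ∅ ∧ s.g = ⊥ ∧ s.β = α ∧ s.n = 0 ∧ ISOWins L M N s

end ShelahGame

namespace ShelahGame

/-- Iterated power function starting at `θ`: `ℶ_o(θ)`. -/
noncomputable def bethAt (θ : Cardinal.{u}) (o : Ordinal.{u}) : Cardinal.{u} :=
  Ordinal.limitRecOn o θ (fun _ x => 2 ^ x)
    (fun o _ ih => ⨆ i : {o' : Ordinal.{u} // o' < o}, ih i.1 i.2)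

/-- A bundled `L`-structure. -/
structure Struc (L : FirstOrder.Language.{u, u}) : Type (u + 1) where
  carrier : Type u
  str : L.Structure carrier

/-- `E⁰_{θ,α}`: ISO has a winning strategy in `Γ_{θ,α}`. -/
def E0 (L : FirstOrder.Language.{u, u}) (θ : Cardinal.{u}) (α : Ordinal.{u})
    (M N : Struc L) : Prop :=
  @ISOWinsGame L M.carrier N.carrier M.str N.str θ α

/-- `E¹_{θ,α}`: the closure of `E⁰_{θ,α}` to an equivalence relation. -/
def E1 (L : FirstOrder.Language.{u, u}) (θ : Cardinal.{u}) (α : Ordinal.{u}) :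
    Struc L → Struc L → Prop :=
  Relation.EqvGen (E0 L θ α)

end ShelahGame

namespace PEquiv

variable {α β γ : Type*}

open Classical in
noncomputable def ofInjOn (f : α → Option β)
    (hf : ∀ a₁ a₂ b, f a₁ = some b → f a₂ = some b → a₁ = a₂) : α ≃. β where
  toFun := f
  invFun b := if h : ∃ a, f a = some b then some h.choose else none
  inv a b := by
    constructor
    · intro hab
      have h : ∃ a, f a = some b := by
        by_contra h
        simp [h] at hab
      obtain rfl : h.choose = a := by simpa [h] using hab
      exact h.choose_spec
    · intro hba
      have h : ∃ a, f a = some b := ⟨a, hba⟩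
      simpa [h] using hf _ _ _ h.choose_spec hba

@[simp]
lemma ofInjOn_apply (f : α → Option β)
    (hf : ∀ a₁ a₂ b, f a₁ = some b → f a₂ = some b → a₁ = a₂) (a : α) :
    ofInjOn f hf a = f a :=
  rfl

lemma le_iff_forall_isSome {f g : α ≃. β} : f ≤ g ↔ ∀ a, (f a).isSome → g a = f a := by
  refine ⟨fun h a ha => ?_, fun h => le_def.2 fun a b hb => ?_⟩
  · obtain ⟨b, hb⟩ := Option.isSome_iff_exists.1 ha
    rw [hb]
    exact le_def.1 h a b hb
  · rw [Option.mem_def, h a (Option.isSome_iff_exists.2 ⟨b, hb⟩), hb]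

lemma symm_le_symm {f g : α ≃. β} : f.symm ≤ g.symm ↔ f ≤ g := by
  simp only [le_def, mem_iff_mem]
  exact ⟨fun h a b => h b a, fun h b a => h a b⟩

lemma trans_le_trans {f f' : α ≃. β} {g g' : β ≃. γ} (hf : f ≤ f') (hg : g ≤ g') :
    f.trans g ≤ f'.trans g' := by
  simp only [le_def, mem_trans]
  rintro a c ⟨b, hab, hbc⟩
  exact ⟨b, le_def.1 hf a b hab, le_def.1 hg b c hbc⟩

lemma isSome_symm_trans {f : γ ≃. α} {g : γ ≃. β} (h : ∀ c, (f c).isSome ↔ (g c).isSome)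
    (a : α) : ((f.symm.trans g) a).isSome ↔ (f.symm a).isSome := by
  change ((f.symm a).bind g).isSome ↔ _
  rcases hfa : f.symm a with _ | c
  · rfl
  · have : f c = some a := (eq_some_iff f).1 hfa
    simpa using (h c).1 (by simp [this])

lemma mk_setOf_isSome_trans_le {α β γ : Type u} (f : α ≃. β) (g : β ≃. γ) :
    #{a | (f.trans g a).isSome} ≤ #β := by
  have hf {a : α} (ha : (f.trans g a).isSome) : (f a).isSome := by
    rw [Option.isSome_iff_ne_none] at ha ⊢
    exact fun h => ha (by simp [PEquiv.trans, h])
  refine mk_le_of_injective (f := fun a : {a | (f.trans g a).isSome} => (f a).get (hf a.2))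
    fun a₁ a₂ h => Subtype.ext (f.inj (Option.eq_some_of_isSome (hf a₁.2)) ?_)
  exact (Option.eq_some_of_isSome (hf a₂.2)).trans (congrArg some h.symm)

end PEquiv

namespace ShelahGame

section BackForth

variable {L : FirstOrder.Language.{u, u}} {Λ : Type u}

instance (S : Struc L) : L.Structure S.carrier := S.str

variable (L Λ) in
def Pointed : Type (u + 1) := Σ S : Struc L, Λ ≃. S.carrier

def Pointed.of {M : Type u} [L.Structure M] (a : Λ ≃. M) : Pointed L Λ := ⟨⟨M, ‹_›⟩, a⟩

variable (L Λ) in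
def IndexedFormula : Type u := Σ k : ℕ, L.BoundedFormula (Fin k) 0 × (Fin k → Λ)

def Pointed.diagram (p : Pointed L Λ) : Set (IndexedFormula L Λ) :=
  {d | d.2.1.IsAtomic ∧ ∃ v : Fin d.1 → p.1.carrier,
    (∀ i, p.2 (d.2.2 i) = some (v i)) ∧ d.2.1.Realize v (fun i => i.elim0)}

namespace Pointed

variable {p q : Pointed L Λ}

lemma realize_of_diagram_subset (h : p.diagram ⊆ q.diagram) {k : ℕ}
    {φ : L.BoundedFormula (Fin k) 0} (hφ : φ.IsAtomic) {ι : Fin k → Λ}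
    {v : Fin k → p.1.carrier} {w : Fin k → q.1.carrier}
    (hv : ∀ i, p.2 (ι i) = some (v i)) (hw : ∀ i, q.2 (ι i) = some (w i))
    (hreal : φ.Realize v (fun i => i.elim0)) : φ.Realize w (fun i => i.elim0) := by
  obtain ⟨-, w', hw', hreal'⟩ := h (show ⟨k, φ, ι⟩ ∈ p.diagram from ⟨hφ, v, hv, hreal⟩)
  obtain rfl : w' = w := funext fun i => Option.some_injective _ ((hw' i).symm.trans (hw i))
  exact hreal'

lemma realize_iff_of_diagram_eq (h : p.diagram = q.diagram) {k : ℕ}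
    {φ : L.BoundedFormula (Fin k) 0} (hφ : φ.IsAtomic) {ι : Fin k → Λ}
    {v : Fin k → p.1.carrier} {w : Fin k → q.1.carrier}
    (hv : ∀ i, p.2 (ι i) = some (v i)) (hw : ∀ i, q.2 (ι i) = some (w i)) :
    φ.Realize v (fun i => i.elim0) ↔ φ.Realize w (fun i => i.elim0) :=
  ⟨realize_of_diagram_subset h.le hφ hv hw, realize_of_diagram_subset h.ge hφ hw hv⟩

-- The atomic formula `x₀ = x₀` records that the index is assigned.
lemma isSome_of_diagram_subset (h : p.diagram ⊆ q.diagram) {i : Λ} (hi : (p.2 i).isSome) :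
    (q.2 i).isSome := by
  obtain ⟨x, hx⟩ := Option.isSome_iff_exists.1 hi
  let φ : L.BoundedFormula (Fin 1) 0 :=
    (Language.Term.var (Sum.inl 0)).bdEqual (Language.Term.var (Sum.inl 0))
  obtain ⟨-, w, hw, -⟩ := h (show ⟨1, φ, fun _ => i⟩ ∈ p.diagram from
    ⟨.equal _ _, fun _ => x, fun _ => hx, by simp [φ]⟩)
  simp [hw 0]

lemma isSome_iff_of_diagram_eq (h : p.diagram = q.diagram) (i : Λ) :
    (p.2 i).isSome ↔ (q.2 i).isSome :=
  ⟨isSome_of_diagram_subset h.le, isSome_of_diagram_subset h.ge⟩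

end Pointed

lemma preservesAtomic_symm_trans {M N : Type u} [L.Structure M] [L.Structure N]
    {a : Λ ≃. M} {b : Λ ≃. N}
    (h : (Pointed.of (L := L) a).diagram = (Pointed.of (L := L) b).diagram) :
    PreservesAtomic L M N (a.symm.trans b) := by
  intro k φ hφ v w hvw
  choose ι hιa hιb using fun i => (PEquiv.mem_trans _ _ _ _).1 (hvw i)
  exact Pointed.realize_iff_of_diagram_eq h hφ (ι := ι)
    (fun i => (PEquiv.mem_iff_mem a).1 (hιa i)) (fun i => hιb i)

def BackForth : Ordinal.{u} → Pointed L Λ → Pointed L Λ → Prop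
  | β, p, q => p.diagram = q.diagram ∧ ∀ β' < β,
      (∀ a' ≥ p.2, ∃ b' ≥ q.2, BackForth β' ⟨p.1, a'⟩ ⟨q.1, b'⟩) ∧
      (∀ b' ≥ q.2, ∃ a' ≥ p.2, BackForth β' ⟨p.1, a'⟩ ⟨q.1, b'⟩)
termination_by β => β

lemma backForth_iff {β : Ordinal.{u}} {p q : Pointed L Λ} :
    BackForth β p q ↔ p.diagram = q.diagram ∧ ∀ β' < β,
      (∀ a' ≥ p.2, ∃ b' ≥ q.2, BackForth β' ⟨p.1, a'⟩ ⟨q.1, b'⟩) ∧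
      (∀ b' ≥ q.2, ∃ a' ≥ p.2, BackForth β' ⟨p.1, a'⟩ ⟨q.1, b'⟩) := by
  rw [BackForth]

namespace BackForth

variable {β β' : Ordinal.{u}} {p q r : Pointed L Λ}

lemma diagram_eq (h : BackForth β p q) : p.diagram = q.diagram := (backForth_iff.1 h).1

lemma forth (h : BackForth β p q) (hβ' : β' < β) {a' : Λ ≃. p.1.carrier} (ha' : p.2 ≤ a') :
    ∃ b' ≥ q.2, BackForth β' ⟨p.1, a'⟩ ⟨q.1, b'⟩ :=
  ((backForth_iff.1 h).2 β' hβ').1 a' ha'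

lemma refl (β : Ordinal.{u}) (p : Pointed L Λ) : BackForth β p p := by
  induction β using WellFoundedLT.induction generalizing p with
  | _ β IH =>
    exact backForth_iff.2 ⟨rfl, fun β' hβ' =>
      ⟨fun a' ha' => ⟨a', ha', IH β' hβ' _⟩, fun b' hb' => ⟨b', hb', IH β' hβ' _⟩⟩⟩

lemma symm (h : BackForth β p q) : BackForth β q p := by
  induction β using WellFoundedLT.induction generalizing p q with
  | _ β IH =>
    obtain ⟨hd, hbf⟩ := backForth_iff.1 h
    refine backForth_iff.2 ⟨hd.symm, fun β' hβ' => ⟨fun b' hb' => ?_, fun a' ha' => ?_⟩⟩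
    · obtain ⟨a', ha', h'⟩ := (hbf β' hβ').2 b' hb'
      exact ⟨a', ha', IH β' hβ' h'⟩
    · obtain ⟨b', hb', h'⟩ := (hbf β' hβ').1 a' ha'
      exact ⟨b', hb', IH β' hβ' h'⟩

lemma trans (hpq : BackForth β p q) (hqr : BackForth β q r) : BackForth β p r := by
  induction β using WellFoundedLT.induction generalizing p q r with
  | _ β IH =>
    obtain ⟨hd₁, hbf₁⟩ := backForth_iff.1 hpq
    obtain ⟨hd₂, hbf₂⟩ := backForth_iff.1 hqr
    refine backForth_iff.2 ⟨hd₁.trans hd₂, fun β' hβ' => ⟨fun a' ha' => ?_, fun c' hc' => ?_⟩⟩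
    · obtain ⟨b', hb', h₁⟩ := (hbf₁ β' hβ').1 a' ha'
      obtain ⟨c', hc', h₂⟩ := (hbf₂ β' hβ').1 b' hb'
      exact ⟨c', hc', IH β' hβ' h₁ h₂⟩
    · obtain ⟨b', hb', h₂⟩ := (hbf₂ β' hβ').2 c' hc'
      obtain ⟨a', ha', h₁⟩ := (hbf₁ β' hβ').2 b' hb'
      exact ⟨a', ha', IH β' hβ' h₁ h₂⟩

end BackForth

variable (L Λ) in
def backForthSetoid (β : Ordinal.{u}) : Setoid (Pointed L Λ) :=
  ⟨BackForth β, ⟨BackForth.refl β, BackForth.symm, BackForth.trans⟩⟩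

variable (L Λ) in
abbrev BackForthClass (β : Ordinal.{u}) : Type (u + 1) := Quotient (backForthSetoid L Λ β)

def extensionClasses (β' : Ordinal.{u}) (p : Pointed L Λ) : Set (BackForthClass L Λ β') :=
  (fun a' => Quotient.mk _ ⟨p.1, a'⟩) '' Set.Ici p.2

lemma backForth_iff_extensionClasses {β : Ordinal.{u}} {p q : Pointed L Λ} :
    BackForth β p q ↔
      p.diagram = q.diagram ∧ ∀ β' < β, extensionClasses β' p = extensionClasses β' q := by
  rw [backForth_iff]
  refine and_congr_right fun _ => forall₂_congr fun β' _ => ?_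
  rw [Set.Subset.antisymm_iff, extensionClasses, extensionClasses, Set.image_subset_iff,
    Set.image_subset_iff]
  simp only [Set.subset_def, Set.mem_preimage, Set.mem_image, Set.mem_Ici]
  refine and_congr (forall₂_congr fun _ _ => exists_congr fun _ => and_congr_right fun _ => ?_)
    (forall₂_congr fun _ _ => exists_congr fun _ => and_congr_right fun _ => ?_)
  · exact ⟨fun h => Quotient.sound h.symm, fun h => (Quotient.exact h).symm⟩
  · exact ⟨fun h => Quotient.sound h, fun h => Quotient.exact h⟩

end BackForth

section BethAt

lemma bethAt_zero (θ : Cardinal.{u}) : bethAt θ 0 = θ := Ordinal.limitRecOn_zero _ _ _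

lemma bethAt_succ (θ : Cardinal.{u}) (o : Ordinal.{u}) : bethAt θ (o + 1) = 2 ^ bethAt θ o := by
  rw [bethAt, Ordinal.limitRecOn_add_one]
  rfl

lemma bethAt_limit (θ : Cardinal.{u}) {o : Ordinal.{u}} (h : Order.IsSuccLimit o) :
    bethAt θ o = ⨆ i : {o' : Ordinal.{u} // o' < o}, bethAt θ i.1 :=
  Ordinal.limitRecOn_limit _ _ _ _ h

lemma le_bethAt_limit (θ : Cardinal.{u}) {o o' : Ordinal.{u}} (h : Order.IsSuccLimit o)
    (ho' : o' < o) : bethAt θ o' ≤ bethAt θ o := by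
  have : Small.{u} {o' : Ordinal.{u} // o' < o} := Ordinal.small_Iio o
  rw [bethAt_limit θ h]
  exact le_ciSup bddAbove_of_small (⟨o', ho'⟩ : {o' : Ordinal.{u} // o' < o})

lemma bethAt_mono (θ : Cardinal.{u}) : Monotone (bethAt θ) := by
  intro o₁ o₂ h
  induction o₂ using Ordinal.limitRecOn with
  | zero => rw [nonpos_iff_eq_zero.1 h]
  | add_one o ih =>
    rcases Order.le_succ_iff_eq_or_le.1 h with rfl | h
    · rfl
    · rw [bethAt_succ]
      exact (ih h).trans (cantor _).le
  | limit o ho ih =>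
    rcases h.eq_or_lt with rfl | h
    · rfl
    · exact le_bethAt_limit θ ho h

lemma beth_le_bethAt {θ : Cardinal.{u}} (hθ : ℵ₀ ≤ θ) (o : Ordinal.{u}) : ℶ_ o ≤ bethAt θ o := by
  induction o using Ordinal.limitRecOn with
  | zero => rwa [beth_zero, bethAt_zero]
  | add_one o ih =>
    rw [beth_add_one, bethAt_succ]
    exact power_le_power_left two_ne_zero ih
  | limit o ho ih =>
    rw [beth_limit ho]
    exact ciSup_le' fun o' => (ih o'.1 o'.2).trans (le_bethAt_limit θ ho o'.2)

lemma two_power_le_bethAt_succ (θ : Cardinal.{u}) (o : Ordinal.{u}) :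
    2 ^ θ ≤ bethAt θ (o + 1) := by
  rw [bethAt_succ]
  exact power_le_power_left two_ne_zero
    ((bethAt_zero θ).ge.trans (bethAt_mono θ (zero_le : 0 ≤ o)))

lemma bethAt_succ_power_card_le {θ : Cardinal.{u}} (hθ : ℵ₀ ≤ θ) (o : Ordinal.{u}) :
    bethAt θ (o + 1) ^ o.card ≤ bethAt θ (o + 1) := by
  have hcard : o.card ≤ bethAt θ o := (o.card_le_beth).trans (beth_le_bethAt hθ o)
  have hinf : ℵ₀ ≤ bethAt θ o := (aleph0_le_beth o).trans (beth_le_bethAt hθ o)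
  rw [bethAt_succ, ← power_mul]
  exact power_le_power_left two_ne_zero ((mul_le_mul' le_rfl hcard).trans (mul_eq_self hinf).le)

end BethAt

section Counting

variable {L : FirstOrder.Language.{u, u}} {Λ : Type u} {θ : Cardinal.{u}}

lemma mk_indexedFormula_le (hθ : ℵ₀ ≤ θ) (hL : L.card ≤ θ) (hΛ : #Λ ≤ θ) :
    #(IndexedFormula L Λ) ≤ θ := by
  have hformula (k : ℕ) : #(L.BoundedFormula (Fin k) 0) ≤ θ := by
    refine (mk_le_of_injective (f := fun φ => (⟨0, φ⟩ : Σ n, L.BoundedFormula (Fin k) n))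
      fun _ _ h => by simpa using h).trans (Language.BoundedFormula.card_le.trans ?_)
    simp only [mk_fin, lift_natCast, lift_uzero]
    exact max_le hθ (add_le_add (natCast_lt_aleph0.le.trans hθ) hL |>.trans (add_eq_self hθ).le)
  have hvaluation (k : ℕ) : #(Fin k → Λ) ≤ θ := by
    rw [mk_arrow, mk_fin, lift_uzero, lift_natCast]
    exact (power_le_power_right hΛ).trans (power_nat_le hθ)
  rw [IndexedFormula, mk_sigma]
  refine (sum_le_sum _ (fun _ => θ) fun k => ?_).trans ?_
  · rw [mk_prod, lift_id, lift_id]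
    exact (mul_le_mul' (hformula k) (hvaluation k)).trans (mul_eq_self hθ).le
  · rw [sum_const, mk_nat, lift_aleph0, lift_uzero]
    exact (aleph0_mul_eq hθ).le

variable (L Λ) in
def classData (β : Ordinal.{u}) :
    BackForthClass L Λ β →
      Set (IndexedFormula L Λ) × ((β' : Set.Iio β) → Set (BackForthClass L Λ β')) :=
  Quotient.lift (fun p => (p.diagram, fun β' => extensionClasses β'.1 p)) fun _ _ h => by
    obtain ⟨hd, he⟩ := backForth_iff_extensionClasses.1 h
    exact Prod.ext hd (funext fun β' => he β' β'.2)

lemma classData_injective (β : Ordinal.{u}) : Function.Injective (classData L Λ β) := by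
  rintro ⟨p⟩ ⟨q⟩ h
  exact Quotient.sound <| backForth_iff_extensionClasses.2
    ⟨congrArg Prod.fst h, fun β' hβ' => congrFun (congrArg Prod.snd h) ⟨β', hβ'⟩⟩

lemma mk_backForthClass_le (hθ : ℵ₀ ≤ θ) (hL : L.card ≤ θ) (hΛ : #Λ ≤ θ) (β : Ordinal.{u}) :
    #(BackForthClass L Λ β) ≤ lift.{u + 1} (bethAt θ (β + 1)) := by
  induction β using WellFoundedLT.induction with
  | _ β IH =>
    set B := bethAt θ (β + 1)
    have hdiagrams : #(Set (IndexedFormula L Λ)) ≤ B := by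
      rw [mk_set]
      exact (power_le_power_left two_ne_zero (mk_indexedFormula_le hθ hL hΛ)).trans
        (two_power_le_bethAt_succ θ β)
    have hclasses (β' : Set.Iio β) : #(Set (BackForthClass L Λ β')) ≤ lift.{u + 1} B := by
      have hβ' : β'.1 + 1 + 1 ≤ β + 1 := by gcongr; exact Order.add_one_le_of_lt β'.2
      rw [mk_set]
      calc (2 : Cardinal) ^ #(BackForthClass L Λ β')
          ≤ 2 ^ lift.{u + 1} (bethAt θ (β'.1 + 1)) :=
            power_le_power_left two_ne_zero (IH β'.1 β'.2)
        _ = lift.{u + 1} (bethAt θ (β'.1 + 1 + 1)) := by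
            rw [bethAt_succ θ (β'.1 + 1), lift_two_power]
        _ ≤ lift.{u + 1} B := lift_le.2 (bethAt_mono θ hβ')
    have hfamilies : #((β' : Set.Iio β) → Set (BackForthClass L Λ β')) ≤ lift.{u + 1} B := by
      rw [mk_pi]
      refine (prod_le_prod _ _ hclasses).trans ?_
      rw [prod_const', mk_Iio_ordinal, ← lift_power]
      exact lift_le.2 (bethAt_succ_power_card_le hθ β)
    have hB : ℵ₀ ≤ lift.{u + 1} B := by
      rw [aleph0_le_lift]
      exact hθ.trans ((cantor θ).le.trans (two_power_le_bethAt_succ θ β))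
    calc #(BackForthClass L Λ β) ≤ _ := mk_le_of_injective (classData_injective β)
      _ = lift.{u + 1} #(Set (IndexedFormula L Λ)) * #((β' : Set.Iio β) → _) := by
          rw [mk_prod, lift_id'.{u, u + 1}]
      _ ≤ lift.{u + 1} B * lift.{u + 1} B := mul_le_mul' (lift_le.2 hdiagrams) hfamilies
      _ = lift.{u + 1} B := mul_eq_self hB

end Counting

section Game

variable {L : FirstOrder.Language.{u, u}} {θ : Cardinal.{u}} {α : Ordinal.{u}}
  {M N : Type u} [L.Structure M] [L.Structure N]

-- An index `(i, n)` is first used in round `n`, so every round has `θ` unused indices.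
abbrev Idx (θ : Cardinal.{u}) : Type u := θ.out × ℕ

lemma mk_idx (hθ : ℵ₀ ≤ θ) : #(Idx θ) = θ := by
  rw [mk_prod, mk_out, mk_nat, lift_uzero, lift_aleph0, mul_aleph0_eq hθ]

lemma exists_le_extension {κ X : Type u} (a : κ × ℕ ≃. X) {n : ℕ}
    (hfresh : ∀ p : κ × ℕ, n ≤ p.2 → a p = none) {A : Set X} (hA : #A ≤ #κ)
    (hran : ∀ x, (a.symm x).isSome → x ∈ A) :
    ∃ a' ≥ a, (∀ x, (a'.symm x).isSome ↔ x ∈ A) ∧ ∀ p : κ × ℕ, n + 1 ≤ p.2 → a' p = none := by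
  classical
  obtain ⟨e⟩ := (le_def _ _).1 hA
  let F : X → Option (κ × ℕ) := fun x =>
    if hx : x ∈ A ∧ a.symm x = none then some (e ⟨x, hx.1⟩, n) else a.symm x
  have hbelow : ∀ x p, a.symm x = some p → p.2 < n := fun x p h => not_le.1 fun hp =>
    Option.some_ne_none x (((PEquiv.eq_some_iff a).1 h).symm.trans (hfresh p hp))
  have hF : ∀ x₁ x₂ p, F x₁ = some p → F x₂ = some p → x₁ = x₂ := by
    intro x₁ x₂ p h₁ h₂
    simp only [F] at h₁ h₂
    split_ifs at h₁ h₂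
    · obtain ⟨h, -⟩ := Prod.ext_iff.1 (Option.some_injective _ (h₁.trans h₂.symm))
      exact congrArg Subtype.val (e.injective h)
    · exact absurd (hbelow _ _ h₂) (by simp [← Option.some_injective _ h₁])
    · exact absurd (hbelow _ _ h₁) (by simp [← Option.some_injective _ h₂])
    · exact a.symm.inj h₁ h₂
  refine ⟨(PEquiv.ofInjOn F hF).symm, PEquiv.le_def.2 fun i x hx => ?_, fun x => ?_,
    fun p hp => Option.eq_none_iff_forall_ne_some.2 fun x hx => ?_⟩
  · have : a.symm x = some i := (PEquiv.eq_some_iff a).2 hx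
    rw [Option.mem_def, PEquiv.eq_some_iff, PEquiv.ofInjOn_apply]
    simp [F, this]
  · change (F x).isSome ↔ x ∈ A
    by_cases hx : x ∈ A ∧ a.symm x = none
    · simp [F, hx]
    · simp only [F, dif_neg hx]
      refine ⟨hran x, fun hxA => ?_⟩
      exact Option.isSome_iff_ne_none.2 (not_and.1 hx hxA)
  · have hFx : F x = some p := (PEquiv.eq_some_iff _).1 hx
    simp only [F] at hFx
    split_ifs at hFx
    · simp [← Option.some_injective _ hFx] at hp
    · exact absurd (hbelow _ _ hFx) (by omega)

lemma PreservesAtomic.symm {g : M ≃. N} (h : PreservesAtomic L M N g) :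
    PreservesAtomic L N M g.symm := fun k φ hφ v w hvw =>
  (h k φ hφ w v fun i => (PEquiv.mem_iff_mem g).1 (hvw i)).symm

structure Invariant (s : GState L M N θ α) (a : Idx θ ≃. M) (b : Idx θ ≃. N) : Prop where
  backForth : BackForth s.β (Pointed.of (L := L) a) (Pointed.of (L := L) b)
  g_eq : s.g = a.symm.trans b
  ran_left : ∀ x, (a.symm x).isSome → x ∈ s.A1
  ran_right : ∀ y, (b.symm y).isSome → y ∈ s.A2
  h1_le : ∀ x, s.h1 x ≤ s.n
  h2_le : ∀ y, s.h2 y ≤ s.n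
  fresh : ∀ p : Idx θ, s.n ≤ p.2 → a p = none

lemma exists_resp_left_of_extensions (hθ : ℵ₀ ≤ θ) {s : GState L M N θ α} {a : Idx θ ≃. M}
    {b : Idx θ ≃. N} (inv : Invariant s a b) {β' : Ordinal.{u}} (hβ : β' < s.β) {A' : Set M}
    (hsub : s.A1 ⊆ A') (hcard : #A' ≤ θ) {a' : Idx θ ≃. M} {b' : Idx θ ≃. N} (ha' : a ≤ a')
    (hb' : b ≤ b') (hbf : BackForth β' (Pointed.of (L := L) a') (Pointed.of (L := L) b'))
    (hran_a' : ∀ x, (a'.symm x).isSome ↔ x ∈ s.A1)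
    (hfresh' : ∀ p : Idx θ, s.n + 1 ≤ p.2 → a' p = none) :
    ∃ t, Resp L M N s (.left β' hβ A' hsub hcard) t ∧ Invariant t a' b' := by
  classical
  have hdom : ∀ i, (a' i).isSome ↔ (b' i).isSome :=
    Pointed.isSome_iff_of_diagram_eq hbf.diagram_eq
  set g := a'.symm.trans b'
  have hdom_g (x : M) : (g x).isSome ↔ x ∈ s.A1 :=
    (PEquiv.isSome_symm_trans hdom x).trans (hran_a' x)
  have hran_g (y : N) : (g.symm y).isSome ↔ (b'.symm y).isSome := by
    rw [PEquiv.symm_trans_rev]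
    exact PEquiv.isSome_symm_trans (fun i => (hdom i).symm) y
  have hcard2 : #(s.A2 ∪ {y | (g.symm y).isSome} : Set N) ≤ θ := by
    rw [PEquiv.symm_trans_rev, PEquiv.symm_symm]
    refine (mk_union_le _ _).trans ((add_le_add s.card2 ?_).trans (add_eq_self hθ).le)
    exact (PEquiv.mk_setOf_isSome_trans_le _ _).trans (mk_idx hθ).le
  let t : GState L M N θ α :=
    { A1 := A'
      A2 := s.A2 ∪ {y | (g.symm y).isSome}
      card1 := hcard
      card2 := hcard2
      h1 := fun x => if x ∈ s.A1 then s.h1 x else s.n + 1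
      h2 := fun y => if y ∈ s.A2 then s.h2 y else 0
      g := g
      dom_sub := fun x hx => hsub ((hdom_g x).1 hx)
      ran_sub := fun y hy => Or.inr hy
      pres := preservesAtomic_symm_trans hbf.diagram_eq
      β := β'
      β_le := hβ.le.trans s.β_le
      n := s.n + 1
      debt1 := fun x hx => by simp [(hdom_g x).1 hx, Nat.lt_succ_of_le (inv.h1_le x)]
      debt2 := fun y _ => by split_ifs <;> simp [Nat.lt_succ_of_le (inv.h2_le y)] }
  refine ⟨t, ⟨rfl, ?_, fun x hx => if_pos hx, fun y hy => if_pos hy, rfl, rfl, rfl, ?_, ?_⟩,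
    ⟨hbf, rfl, fun x hx => hsub ((hran_a' x).1 hx), fun y hy => Or.inr ((hran_g y).2 hy), ?_, ?_,
      hfresh'⟩⟩
  · rw [inv.g_eq]
    exact PEquiv.le_iff_forall_isSome.1 (PEquiv.trans_le_trans (PEquiv.symm_le_symm.2 ha') hb')
  · exact fun x _ hx => (if_neg hx).ge
  · exact fun x => (hdom_g x).trans (iff_self_and.2 fun _ => Nat.lt_succ_of_le (inv.h1_le x))
  · intro x
    have := inv.h1_le x
    dsimp only [t]
    split_ifs <;> omega
  · intro y
    have := inv.h2_le y
    dsimp only [t]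
    split_ifs <;> omega

lemma exists_resp_left (hθ : ℵ₀ ≤ θ) {s : GState L M N θ α} {a : Idx θ ≃. M} {b : Idx θ ≃. N}
    (inv : Invariant s a b) {β' : Ordinal.{u}} (hβ : β' < s.β) {A' : Set M} (hsub : s.A1 ⊆ A')
    (hcard : #A' ≤ θ) :
    ∃ t, Resp L M N s (.left β' hβ A' hsub hcard) t ∧ ∃ a' b', Invariant t a' b' := by
  obtain ⟨a', ha', hran_a', hfresh'⟩ :=
    exists_le_extension a inv.fresh (s.card1.trans (mk_out θ).ge) inv.ran_left
  obtain ⟨b', hb', hbf⟩ := inv.backForth.forth hβ ha'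
  obtain ⟨t, hresp, inv'⟩ :=
    exists_resp_left_of_extensions hθ inv hβ hsub hcard ha' hb' hbf hran_a' hfresh'
  exact ⟨t, hresp, a', b', inv'⟩

def GState.swap (s : GState L M N θ α) : GState L N M θ α where
  A1 := s.A2
  A2 := s.A1
  card1 := s.card2
  card2 := s.card1
  h1 := s.h2
  h2 := s.h1
  g := s.g.symm
  dom_sub := s.ran_sub
  ran_sub := s.dom_sub
  pres := s.pres.symm
  β := s.β
  β_le := s.β_le
  n := s.n
  debt1 := s.debt2
  debt2 := s.debt1

lemma Resp.of_swap {s : GState L M N θ α} {β' : Ordinal.{u}} {hβ : β' < s.β} {A' : Set N}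
    {hsub : s.A2 ⊆ A'} {hcard : #A' ≤ θ} {t : GState L N M θ α}
    (h : Resp L N M s.swap (.left β' hβ A' hsub hcard) t) :
    Resp L M N s (.right β' hβ A' hsub hcard) t.swap := by
  obtain ⟨hn, hg, h₂, h₁, hmove⟩ := h
  refine ⟨hn, ?_, h₁, h₂, hmove⟩
  rw [← PEquiv.le_iff_forall_isSome] at hg ⊢
  exact PEquiv.symm_le_symm.1 hg

lemma Invariant.swap {s : GState L M N θ α} {a : Idx θ ≃. M} {b : Idx θ ≃. N}
    (inv : Invariant s a b) : Invariant s.swap b a where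
  backForth := inv.backForth.symm
  g_eq := by
    change s.g.symm = _
    rw [inv.g_eq, PEquiv.symm_trans_rev, PEquiv.symm_symm]
  ran_left := inv.ran_right
  ran_right := inv.ran_left
  h1_le := inv.h2_le
  h2_le := inv.h1_le
  fresh p hp := Option.not_isSome_iff_eq_none.1 fun h => by
    have : (a p).isSome := (Pointed.isSome_iff_of_diagram_eq inv.backForth.diagram_eq p).2 h
    simp [inv.fresh p hp] at this

lemma exists_resp (hθ : ℵ₀ ≤ θ) {s : GState L M N θ α} {a : Idx θ ≃. M} {b : Idx θ ≃. N}
    (inv : Invariant s a b) (m : AISMove L M N s) :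
    ∃ t, Resp L M N s m t ∧ ∃ a' b', Invariant t a' b' := by
  cases m with
  | left β' hβ A' hsub hcard => exact exists_resp_left hθ inv hβ hsub hcard
  | right β' hβ A' hsub hcard =>
    obtain ⟨t, hresp, a', b', inv'⟩ := exists_resp_left hθ inv.swap (s := s.swap) hβ hsub hcard
    exact ⟨t.swap, hresp.of_swap, b', a', inv'.swap⟩

lemma Resp.β_lt {s : GState L M N θ α} {m : AISMove L M N s} {t : GState L M N θ α}
    (h : Resp L M N s m t) : t.β < s.β := by
  cases m with
  | left β' hβ => exact h.2.2.2.2.1 ▸ hβ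
  | right β' hβ => exact h.2.2.2.2.1 ▸ hβ

theorem isoWins_of_invariant (hθ : ℵ₀ ≤ θ) {s : GState L M N θ α} {a : Idx θ ≃. M}
    {b : Idx θ ≃. N} (inv : Invariant s a b) : ISOWins L M N s :=
  .intro s (fun m => (exists_resp hθ inv m).choose)
    (fun m => (exists_resp hθ inv m).choose_spec.1) fun m =>
      have ⟨_, _, inv'⟩ := (exists_resp hθ inv m).choose_spec.2
      isoWins_of_invariant hθ inv'
termination_by s.β
decreasing_by exact (exists_resp hθ inv m).choose_spec.1.β_lt

theorem isoWinsGame_of_backForth (hθ : ℵ₀ ≤ θ)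
    (h : BackForth α (Pointed.of (L := L) (⊥ : Idx θ ≃. M))
      (Pointed.of (L := L) (⊥ : Idx θ ≃. N))) :
    ISOWinsGame L M N θ α := by
  have hpres : PreservesAtomic L M N ⊥ := by
    simpa [PEquiv.symm_bot, PEquiv.bot_trans] using preservesAtomic_symm_trans h.diagram_eq
  let s : GState L M N θ α :=
    { A1 := ∅, A2 := ∅, card1 := by simp, card2 := by simp, h1 := 0, h2 := 0, g := ⊥,
      dom_sub := by simp, ran_sub := by simp, pres := hpres, β := α, β_le := le_rfl, n := 0,
      debt1 := by simp, debt2 := by simp }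
  exact ⟨s, rfl, rfl, rfl, rfl, rfl, isoWins_of_invariant hθ
    ⟨h, by simp [s, PEquiv.symm_bot], by simp, by simp, by simp [s], by simp [s], by simp⟩⟩

end Game

/-- For a vocabulary `τ` with `|τ| ≤ θ` and an ordinal `α`, the
equivalence closure `E¹_{θ,α}` of `E⁰_{θ,α}` is an equivalence relation on the class of
`τ`-structures with at most `ℶ_{α+1}(θ)` equivalence classes. -/
theorem e1_equivalence_and_classes (L : FirstOrder.Language.{u, u}) (θ : Cardinal.{u})
    (hθ : ℵ₀ ≤ θ) (hL : L.card ≤ θ) (α : Ordinal.{u}) :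
    Equivalence (E1 L θ α) ∧
      #(Quot (E1 L θ α)) ≤ Cardinal.lift.{u + 1} (bethAt θ (α + 1)) := by
  refine ⟨Relation.EqvGen.is_equivalence _, ?_⟩
  let classOf (c : Quot (E1 L θ α)) : BackForthClass L (Idx θ) α := ⟦⟨c.out, ⊥⟩⟧
  have hinj : Function.Injective classOf := by
    intro c₁ c₂ h
    rw [← c₁.out_eq, ← c₂.out_eq]
    exact Quot.sound (.rel _ _ (isoWinsGame_of_backForth hθ (Quotient.exact h)))
  exact (mk_le_of_injective hinj).trans (mk_backForthClass_le hθ hL (mk_idx hθ).le α)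

end ShelahGame
end

section
/- If λ = λ^{ℵ₀} and λ ≥ 2^θ for an infinite cardinal θ ≤ λ, then there exists a family P ⊆ [λ]^{≤θ} with |P| ≤ λ such that every u ∈ [λ]^{≤θ} is contained in the union of countably many members of P, if and only if λ = λ^θ. -/
/-!
A function `g : θ → A` has range of size at most `θ`, so its range lies in the union of a
countable subfamily `Q ⊆ P`; that union has size at most `ℵ₀ · θ = θ`, so `g` is one of at most
`θ ^ θ = 2 ^ θ` functions into it. Counting the countable subfamilies gives
`#A ^ θ ≤ max(#P, ℵ₀) ^ ℵ₀ · 2 ^ θ`, which is `≤ λ` under the hypotheses. Conversely, when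
`λ ^ θ = λ` the family of all subsets of size at most `θ` covers everything with singletons.
-/

universe u

open Cardinal

theorem mk_biUnion_le_of_countable {A : Type u} {θ : Cardinal.{u}} (hθ : ℵ₀ ≤ θ)
    {P : Set (Set A)} (hP : ∀ B ∈ P, #B ≤ θ) {Q : Set P} (hQ : #Q ≤ ℵ₀) :
    #(⋃ p ∈ Q, (p : Set A)) ≤ θ :=
  calc #(⋃ p ∈ Q, (p : Set A)) ≤ #Q * ⨆ p : Q, #((p : P) : Set A) := mk_biUnion_le _ _
    _ ≤ ℵ₀ * θ := by
        gcongr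
        exact ciSup_le' fun p => hP _ p.1.2
    _ = θ := aleph0_mul_eq hθ

theorem power_le_of_countable_cover {A : Type u} {θ : Cardinal.{u}} (hθ : ℵ₀ ≤ θ)
    (P : Set (Set A)) (hP : ∀ B ∈ P, #B ≤ θ)
    (hcover : ∀ u : Set A, #u ≤ θ → ∃ Q ⊆ P, Q.Countable ∧ u ⊆ ⋃₀ Q) :
    #A ^ θ ≤ max #P ℵ₀ ^ ℵ₀ * θ ^ θ := by
  induction θ using Cardinal.inductionOn with | _ T
  let I := {Q : Set P // #Q ≤ ℵ₀}
  let F : (Σ Q : I, T → ⋃ p ∈ Q.1, (p : Set A)) → (T → A) := fun x t => x.2 t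
  have hF : Function.Surjective F := by
    intro g
    obtain ⟨Q, hQP, hQ, hgQ⟩ := hcover (Set.range g) mk_range_le
    have hQ' : #(Subtype.val ⁻¹' Q : Set P) ≤ ℵ₀ :=
      le_aleph0_iff_set_countable.2 (hQ.preimage Subtype.val_injective)
    have hg : ∀ t, g t ∈ ⋃ p ∈ (Subtype.val ⁻¹' Q : Set P), (p : Set A) := fun t => by
      obtain ⟨B, hBQ, hgB⟩ := hgQ ⟨t, rfl⟩
      exact Set.mem_biUnion (x := ⟨B, hQP hBQ⟩) hBQ hgB
    exact ⟨⟨⟨_, hQ'⟩, fun t => ⟨g t, hg t⟩⟩, rfl⟩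
  calc #A ^ #T = #(T → A) := power_def A T
    _ ≤ #(Σ Q : I, T → ⋃ p ∈ Q.1, (p : Set A)) := mk_le_of_surjective hF
    _ ≤ sum fun _ : I => #T ^ #T := by
        rw [mk_sigma]
        refine sum_le_sum _ _ fun Q => ?_
        rw [← power_def]
        exact power_le_power_right (mk_biUnion_le_of_countable hθ hP Q.2)
    _ = #I * #T ^ #T := by rw [sum_const, lift_id, lift_id]
    _ ≤ max #P ℵ₀ ^ ℵ₀ * #T ^ #T := by gcongr; exact mk_bounded_set_le P ℵ₀

/-- If `λ = λ^ℵ₀` and `λ ≥ 2^θ` for an infinite cardinal `θ ≤ λ`,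
then there is a family `P ⊆ [λ]^{≤θ}` with `|P| ≤ λ` such that every `u ∈ [λ]^{≤θ}` is
contained in the union of countably many members of `P`, if and only if `λ = λ^θ`. -/
theorem exists_cover_iff_pow_eq (θ lam : Cardinal.{u}) (hθ : ℵ₀ ≤ θ) (hθlam : θ ≤ lam)
    (hcount : lam ^ (ℵ₀ : Cardinal.{u}) = lam) (h2 : 2 ^ θ ≤ lam)
    (A : Type u) (hA : #A = lam) :
    (∃ P : Set (Set A), #P ≤ lam ∧
        (∀ B ∈ P, #B ≤ θ) ∧
        (∀ u : Set A, #u ≤ θ → ∃ Q ⊆ P, Q.Countable ∧ u ⊆ ⋃₀ Q)) ↔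
      lam ^ θ = lam := by
  have hlam : ℵ₀ ≤ lam := hθ.trans hθlam
  constructor
  · rintro ⟨P, hPlam, hPθ, hcover⟩
    refine le_antisymm ?_ (self_le_power _ (one_le_aleph0.trans hθ))
    calc lam ^ θ ≤ max #P ℵ₀ ^ ℵ₀ * θ ^ θ := hA ▸ power_le_of_countable_cover hθ P hPθ hcover
      _ ≤ lam ^ ℵ₀ * 2 ^ θ := by
          rw [power_self_eq hθ]
          exact mul_le_mul_left (power_le_power_right (max_le hPlam hlam)) _
      _ = lam := by rw [hcount, mul_eq_left hlam h2 (power_ne_zero θ two_ne_zero)]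
  · intro hpow
    refine ⟨{B | #B ≤ θ}, ?_, fun _ hB => hB,
      fun u hu => ⟨{u}, by simpa using hu, Set.countable_singleton u, by simp⟩⟩
    exact (mk_bounded_set_le A θ).trans_eq (by rw [hA, max_eq_left hlam, hpow])
end
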